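/- A prime-field-valued signal is completely determined by the FFHT coefficients indexed by one representative of each Hartley cyclotomic coset: assume F has characteristic p (p an odd prime), j^p = −j, and (N : F) is invertible in F. Let S ⊆ ZMod N be a set meeting every orbit of the multiplication-by-(−p) action on ZMod N (i.e., for every k ∈ ZMod N there exist s ∈ S and n ∈ ℕ with s = (−p)^n·k in ZMod N). If v, w : ZMod N → F satisfy v_i^p = v_i and w_i^p = w_i for all i, and their FFHTs agree on S, then v = w. -/

import Mathlib

/-!
Frobenius swaps `1 - j` and `1 + j` (as `j ^ p = -j`) and sends `ζ ^ a` to `ζ ^ (p a)`, so for a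
signal with values fixed by Frobenius the FFHT satisfies `V_k ^ p = V_{-pk}`: it vanishes on a
whole Hartley cyclotomic coset once it vanishes at one element. Apply this to `v - w`. Its FFHT
is then zero, and the FFHT is injective by the orthogonality
`∑_k cas_k(i) cas_k(m) = N δ_{im}`, where the terms in `ζ^{±k(i+m)}` cancel because
`(1 - j)² + (1 + j)² = 0`.
-/

/-- The finite-field `cas` (cos-and-sin) carrier function over a field `F`:
`cas_k(i) = ((1 - j)·ζ^{ki} + (1 + j)·ζ^{-ki})/2`, where the exponents are taken
through representatives of `k·i` in `ZMod N`. -/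
def cas {F : Type*} [Field F] {N : ℕ} (j ζ : F) (k i : ZMod N) : F :=
  ((1 - j) * ζ ^ (k * i).val + (1 + j) * ζ ^ (-(k * i)).val) / 2

open AddChar

section Cas

variable {F : Type*} [Field F] {N : ℕ} [NeZero N] {j ζ : F}

lemma cas_eq_zmodChar (hζ : ζ ^ N = 1) (k i : ZMod N) :
    cas j ζ k i = ((1 - j) * zmodChar N hζ (k * i) + (1 + j) * zmodChar N hζ (-(k * i))) / 2 :=
  rfl

lemma cas_mul_cas (hζ : ζ ^ N = 1) (hj : j ^ 2 = -1) (h2 : (2 : F) ≠ 0) (k i m : ZMod N) :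
    cas j ζ k i * cas j ζ k m =
      (j * (zmodChar N hζ (k * -(i + m)) - zmodChar N hζ (k * (i + m)))
        + zmodChar N hζ (k * (i - m)) + zmodChar N hζ (k * (m - i))) / 2 := by
  simp only [cas_eq_zmodChar hζ]
  set ψ := zmodChar N hζ
  have hmul (a b c : ZMod N) (h : a + b = c) : ψ a * ψ b = ψ c := by
    rw [← h, map_add_eq_mul]
  have e1 := hmul (k * i) (k * m) (k * (i + m)) (by ring)
  have e2 := hmul (k * i) (-(k * m)) (k * (i - m)) (by ring)
  have e3 := hmul (-(k * i)) (k * m) (k * (m - i)) (by ring)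
  have e4 := hmul (-(k * i)) (-(k * m)) (k * -(i + m)) (by ring)
  rw [div_mul_div_comm, div_eq_div_iff (mul_ne_zero h2 h2) h2]
  linear_combination 2 * ((1 - j) ^ 2 * e1 + (1 - j ^ 2) * (e2 + e3) + (1 + j) ^ 2 * e4
    + (ψ (k * (i + m)) - ψ (k * (i - m)) - ψ (k * (m - i)) + ψ (k * -(i + m))) * hj)

lemma cas_pow_char (p : ℕ) [Fact p.Prime] [CharP F p] (hζ : ζ ^ N = 1) (hjp : j ^ p = -j)
    (k i : ZMod N) : cas j ζ k i ^ p = cas j ζ (-(p : ZMod N) * k) i := by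
  have hψ (a : ZMod N) : zmodChar N hζ a ^ p = zmodChar N hζ (p * a) := by
    rw [← map_nsmul_eq_pow, nsmul_eq_mul]
  have h2 : (2 : F) ^ p = 2 := by
    rw [← one_add_one_eq_two, add_pow_char, one_pow]
  simp only [cas_eq_zmodChar hζ, div_pow, add_pow_char, mul_pow, sub_pow_char, one_pow, hjp, h2,
    hψ]
  ring_nf

lemma sum_cas_mul_cas (hζ : IsPrimitiveRoot ζ N) (hj : j ^ 2 = -1) (h2 : (2 : F) ≠ 0)
    (i m : ZMod N) : ∑ k, cas j ζ k i * cas j ζ k m = if i = m then (N : F) else 0 := by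
  have hsum (b : ZMod N) :
      ∑ k, zmodChar N hζ.pow_eq_one (k * b) = if b = 0 then (N : F) else 0 := by
    rw [sum_mulShift b (zmodChar_primitive_of_primitive_root N hζ), ZMod.card]
    split_ifs <;> simp
  simp only [cas_mul_cas hζ.pow_eq_one hj h2, ← Finset.sum_div, Finset.sum_add_distrib,
    Finset.sum_sub_distrib, ← Finset.mul_sum, hsum, neg_eq_zero, sub_eq_zero, eq_comm (a := m)]
  split_ifs <;> field_simp <;> ring

end Cas

section FFHT

variable {F : Type*} [Field F] {N : ℕ} [NeZero N] {j ζ : F}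

def ffht (j ζ : F) (v : ZMod N → F) (k : ZMod N) : F :=
  ∑ i, v i * cas j ζ k i

lemma ffht_sub (v w : ZMod N → F) : ffht j ζ (v - w) = ffht j ζ v - ffht j ζ w := by
  ext k
  simp only [ffht, Pi.sub_apply, sub_mul, Finset.sum_sub_distrib]

lemma sum_ffht_mul_cas (hζ : IsPrimitiveRoot ζ N) (hj : j ^ 2 = -1) (h2 : (2 : F) ≠ 0)
    (v : ZMod N → F) (m : ZMod N) : ∑ k, ffht j ζ v k * cas j ζ k m = N * v m := by
  simp only [ffht, Finset.sum_mul, mul_assoc]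
  rw [Finset.sum_comm]
  simp only [← Finset.mul_sum, sum_cas_mul_cas hζ hj h2, mul_ite, mul_zero,
    Finset.sum_ite_eq, Finset.mem_univ, if_true, mul_comm]

lemma eq_zero_of_ffht_eq_zero (hζ : IsPrimitiveRoot ζ N) (hj : j ^ 2 = -1) (h2 : (2 : F) ≠ 0)
    (hN : IsUnit (N : F)) {v : ZMod N → F} (h0 : ffht j ζ v = 0) : v = 0 := by
  ext m
  have h := sum_ffht_mul_cas hζ hj h2 v m
  simp only [h0, Pi.zero_apply, zero_mul, Finset.sum_const_zero] at h
  exact (hN.mul_right_eq_zero).mp h.symm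

variable (p : ℕ) [Fact p.Prime] [CharP F p]

lemma ffht_pow_char (hζ : ζ ^ N = 1) (hjp : j ^ p = -j) {v : ZMod N → F}
    (hv : ∀ i, v i ^ p = v i) (k : ZMod N) :
    ffht j ζ v k ^ p = ffht j ζ v (-(p : ZMod N) * k) := by
  simp only [ffht, sum_pow_char, mul_pow, hv, cas_pow_char p hζ hjp]

lemma ffht_pow_char_pow (hζ : ζ ^ N = 1) (hjp : j ^ p = -j) {v : ZMod N → F}
    (hv : ∀ i, v i ^ p = v i) (n : ℕ) (k : ZMod N) :
    ffht j ζ v k ^ p ^ n = ffht j ζ v ((-(p : ZMod N)) ^ n * k) := by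
  induction n with
  | zero => simp
  | succ n ih => rw [pow_succ, pow_mul, ih, ffht_pow_char p hζ hjp hv, pow_succ', mul_assoc]

lemma ffht_eq_zero_of_eq_zero_on_orbit_reps (hζ : ζ ^ N = 1) (hjp : j ^ p = -j)
    {v : ZMod N → F} (hv : ∀ i, v i ^ p = v i) {S : Set (ZMod N)}
    (hS : ∀ k : ZMod N, ∃ s ∈ S, ∃ n : ℕ, s = (-(p : ZMod N)) ^ n * k)
    (hvS : ∀ s ∈ S, ffht j ζ v s = 0) : ffht j ζ v = 0 := by
  ext k
  obtain ⟨s, hs, n, rfl⟩ := hS k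
  have h := hvS _ hs
  rw [← ffht_pow_char_pow p hζ hjp hv] at h
  exact pow_eq_zero_iff (pow_ne_zero n (Fact.out : p.Prime).ne_zero) |>.mp h

end FFHT

theorem ffht_determined_by_coset_leaders_general {F : Type*} [Field F] (p N : ℕ)
    [Fact p.Prime] [CharP F p] [NeZero N]
    (j ζ : F) (h2 : IsUnit (2 : F)) (hj : j ^ 2 = -1) (hjp : j ^ p = -j)
    (hζ : orderOf ζ = N) (hNunit : IsUnit (N : F))
    (S : Set (ZMod N))
    (hS : ∀ k : ZMod N, ∃ s ∈ S, ∃ n : ℕ, s = (-(p : ZMod N)) ^ n * k)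
    (v w : ZMod N → F)
    (hv : ∀ i : ZMod N, v i ^ p = v i)
    (hw : ∀ i : ZMod N, w i ^ p = w i)
    (hagree : ∀ s ∈ S, ∑ i : ZMod N, v i * cas j ζ s i
      = ∑ i : ZMod N, w i * cas j ζ s i) :
    v = w := by
  have hprim : IsPrimitiveRoot ζ N := hζ ▸ IsPrimitiveRoot.orderOf ζ
  have hvw : ∀ i, (v - w) i ^ p = (v - w) i := fun i => by
    rw [Pi.sub_apply, sub_pow_char, hv, hw]
  have hS_zero : ∀ s ∈ S, ffht j ζ (v - w) s = 0 := fun s hs => by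
    rw [ffht_sub, Pi.sub_apply, sub_eq_zero]
    exact hagree s hs
  rw [← sub_eq_zero]
  exact eq_zero_of_ffht_eq_zero hprim hj h2.ne_zero hNunit <|
    ffht_eq_zero_of_eq_zero_on_orbit_reps p hprim.pow_eq_one hjp hvw hS hS_zero

/-- A prime-field-valued signal is completely determined by the FFHT coefficients
indexed by one representative of each Hartley cyclotomic coset (the orbits of the
multiplication-by-`(-p)` action on `ZMod N`). -/
theorem ffht_determined_by_coset_leaders {F : Type*} [Field F] (p N : ℕ)
    [Fact p.Prime] (hodd : Odd p) [CharP F p] [NeZero N]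
    (j ζ : F) (h2 : IsUnit (2 : F)) (hj : j ^ 2 = -1) (hjp : j ^ p = -j)
    (hζ : orderOf ζ = N) (hNunit : IsUnit (N : F))
    (S : Set (ZMod N))
    (hS : ∀ k : ZMod N, ∃ s ∈ S, ∃ n : ℕ, s = (-(p : ZMod N)) ^ n * k)
    (v w : ZMod N → F)
    (hv : ∀ i : ZMod N, v i ^ p = v i)
    (hw : ∀ i : ZMod N, w i ^ p = w i)
    (hagree : ∀ s ∈ S, ∑ i : ZMod N, v i * cas j ζ s i
      = ∑ i : ZMod N, w i * cas j ζ s i) :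
    v = w :=
  ffht_determined_by_coset_leaders_general p N j ζ h2 hj hjp hζ hNunit S hS v w hv hw hagree
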